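/- arXiv:2210.10422 — 2 statements merged into one kernel-verified Lean document; each statement's English description precedes it below -/
import Mathlib

section
/- Let P be a homothetic packing of n squares with contact graph G = ([n], E). If K and K' are two distinct cliques of size 4 in G, then |K ∩ K'| ≤ 2. -/
open Finset Real

noncomputable section

/-- The standard square `[-1,1] × [-1,1]`. -/
def stdSquare : Set (ℝ × ℝ) := {q : ℝ × ℝ | -1 ≤ q.1 ∧ q.1 ≤ 1 ∧ -1 ≤ q.2 ∧ q.2 ≤ 1}

/-- The homothetic copy `r • S + p` of the standard square (radius `r`, centre `p`). -/
def homSq (r : ℝ) (p : ℝ × ℝ) : Set (ℝ × ℝ) := (fun q => r • q + p) '' stdSquare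

/-- A homothetic packing of `n` squares with radii `r` and centres `p`:
all radii are positive and the interiors of the squares are pairwise disjoint. -/
def IsSqPacking {n : ℕ} (r : Fin n → ℝ) (p : Fin n → ℝ × ℝ) : Prop :=
  (∀ i, 0 < r i) ∧
  ∀ i j, i ≠ j → interior (homSq (r i) (p i)) ∩ interior (homSq (r j) (p j)) = ∅

/-- Squares `i` and `j` are distinct and touch: an edge of the contact graph. -/
def SqContact {n : ℕ} (r : Fin n → ℝ) (p : Fin n → ℝ × ℝ) (i j : Fin n) : Prop :=
  i ≠ j ∧ (homSq (r i) (p i) ∩ homSq (r j) (p j)).Nonempty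

/-- The contact graph of a homothetic square packing. -/
def contactGraph {n : ℕ} (r : Fin n → ℝ) (p : Fin n → ℝ × ℝ) : SimpleGraph (Fin n) where
  Adj i j := SqContact r p i j
  symm.symm := by
    intro i j h
    refine ⟨h.1.symm, ?_⟩
    rw [Set.inter_comm]
    exact h.2
  loopless.irrefl := fun i h => h.1 rfl

/-- `{i,j}` is an x-direction contact: the squares touch and
`r i + r j = |x_i - x_j| ≥ |y_i - y_j|`. -/
def XContact {n : ℕ} (r : Fin n → ℝ) (p : Fin n → ℝ × ℝ) (i j : Fin n) : Prop :=
  SqContact r p i j ∧ r i + r j = |(p i).1 - (p j).1| ∧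
    |(p i).2 - (p j).2| ≤ |(p i).1 - (p j).1|

/-- `{i,j}` is a y-direction contact: the squares touch and
`r i + r j = |y_i - y_j| ≥ |x_i - x_j|`. -/
def YContact {n : ℕ} (r : Fin n → ℝ) (p : Fin n → ℝ × ℝ) (i j : Fin n) : Prop :=
  SqContact r p i j ∧ r i + r j = |(p i).2 - (p j).2| ∧
    |(p i).1 - (p j).1| ≤ |(p i).2 - (p j).2|

/-- The graph `([n], E_x)` of x-direction contacts. -/
def xGraph {n : ℕ} (r : Fin n → ℝ) (p : Fin n → ℝ × ℝ) : SimpleGraph (Fin n) where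
  Adj i j := XContact r p i j
  symm.symm := by
    intro i j h
    refine ⟨(contactGraph r p).adj_symm h.1, ?_, ?_⟩
    · rw [abs_sub_comm, add_comm]; exact h.2.1
    · rw [abs_sub_comm ((p j).2), abs_sub_comm ((p j).1)]; exact h.2.2
  loopless.irrefl := fun i h => h.1.1 rfl

/-- The graph `([n], E_y)` of y-direction contacts. -/
def yGraph {n : ℕ} (r : Fin n → ℝ) (p : Fin n → ℝ × ℝ) : SimpleGraph (Fin n) where
  Adj i j := YContact r p i j
  symm.symm := by
    intro i j h
    refine ⟨(contactGraph r p).adj_symm h.1, ?_, ?_⟩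
    · rw [abs_sub_comm, add_comm]; exact h.2.1
    · rw [abs_sub_comm ((p j).2), abs_sub_comm ((p j).1)]; exact h.2.2
  loopless.irrefl := fun i h => h.1.1 rfl

/-- Positive radii satisfy the weak generic condition if the only `σ : [n] → {-1,0,1}`
with at least 4 zeroes satisfying `Σ σ i * r i = 0` is the zero function. -/
def WeakGeneric {n : ℕ} (r : Fin n → ℝ) : Prop :=
  ∀ σ : Fin n → ℤ, (∀ i, σ i = -1 ∨ σ i = 0 ∨ σ i = 1) →
    4 ≤ (Finset.univ.filter fun i => σ i = 0).card →
    (∑ i, (σ i : ℝ) * r i) = 0 → σ = 0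

/-- `z` is a corner of the axis-parallel square with radius `r` and centre `c`. -/
def IsSqCorner (r : ℝ) (c z : ℝ × ℝ) : Prop := |z.1 - c.1| = r ∧ |z.2 - c.2| = r

/-- The four squares `i, j, k, l` share a corner: their common intersection is a single
point which is a corner of each of the four squares. -/
def ShareCorner {n : ℕ} (r : Fin n → ℝ) (p : Fin n → ℝ × ℝ) (i j k l : Fin n) : Prop :=
  ∃ z : ℝ × ℝ,
    homSq (r i) (p i) ∩ homSq (r j) (p j) ∩ homSq (r k) (p k) ∩ homSq (r l) (p l) = {z} ∧
    IsSqCorner (r i) (p i) z ∧ IsSqCorner (r j) (p j) z ∧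
    IsSqCorner (r k) (p k) z ∧ IsSqCorner (r l) (p l) z


lemma homSq_eq {r : ℝ} (hr : 0 < r) (p : ℝ × ℝ) :
    homSq r p = {q : ℝ × ℝ | |q.1 - p.1| ≤ r ∧ |q.2 - p.2| ≤ r} := by
  ext q
  simp only [homSq, stdSquare, Set.mem_image, Set.mem_setOf_eq]
  constructor
  · rintro ⟨w, ⟨h1, h2, h3, h4⟩, rfl⟩
    have e1 : (r • w + p).1 - p.1 = r * w.1 := by simp
    have e2 : (r • w + p).2 - p.2 = r * w.2 := by simp
    rw [e1, e2]
    constructor <;> rw [abs_le] <;> constructor <;> nlinarith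
  · rintro ⟨h1, h2⟩
    obtain ⟨h1l, h1r⟩ := abs_le.mp h1
    obtain ⟨h2l, h2r⟩ := abs_le.mp h2
    refine ⟨⟨(q.1 - p.1)/r, (q.2 - p.2)/r⟩, ⟨?_, ?_, ?_, ?_⟩, ?_⟩
    · rw [le_div_iff₀ hr]; linarith
    · rw [div_le_one hr]; linarith
    · rw [le_div_iff₀ hr]; linarith
    · rw [div_le_one hr]; linarith
    · have : r ≠ 0 := ne_of_gt hr
      ext <;> simp <;> field_simp <;> ring

lemma mem_interior_homSq {r : ℝ} (hr : 0 < r) (p q : ℝ × ℝ)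
    (h1 : |q.1 - p.1| < r) (h2 : |q.2 - p.2| < r) : q ∈ interior (homSq r p) := by
  have hsub : {z : ℝ × ℝ | |z.1 - p.1| < r ∧ |z.2 - p.2| < r} ⊆ homSq r p := by
    rw [homSq_eq hr]
    exact fun z hz => ⟨hz.1.le, hz.2.le⟩
  have hopen : IsOpen {z : ℝ × ℝ | |z.1 - p.1| < r ∧ |z.2 - p.2| < r} := by
    have : {z : ℝ × ℝ | |z.1 - p.1| < r ∧ |z.2 - p.2| < r}
        = (fun z : ℝ × ℝ => z.1) ⁻¹' (Metric.ball p.1 r) ∩ (fun z : ℝ × ℝ => z.2) ⁻¹' (Metric.ball p.2 r) := by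
      ext z; simp [Metric.mem_ball, Real.dist_eq]
    rw [this]
    exact ((Metric.isOpen_ball).preimage continuous_fst).inter ((Metric.isOpen_ball).preimage continuous_snd)
  exact interior_maximal hsub hopen ⟨h1, h2⟩

lemma no_overlap {n : ℕ} (r : Fin n → ℝ) (p : Fin n → ℝ × ℝ) (hP : IsSqPacking r p)
    (i j : Fin n) (hij : i ≠ j)
    (hx : |(p i).1 - (p j).1| < r i + r j) (hy : |(p i).2 - (p j).2| < r i + r j) : False := by
  have hri := hP.1 i
  have hrj := hP.1 j
  have hs : 0 < r i + r j := by linarith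
  set w : ℝ × ℝ := ((r j * (p i).1 + r i * (p j).1) / (r i + r j),
                    (r j * (p i).2 + r i * (p j).2) / (r i + r j)) with hw
  have key : ∀ (a b ra rb : ℝ), 0 < ra → 0 < rb → |a - b| < ra + rb →
      |(rb * a + ra * b) / (ra + rb) - a| < ra := by
    intro a b ra rb hra hrb hab
    have hsab : 0 < ra + rb := by linarith
    have e : (rb * a + ra * b) / (ra + rb) - a = ra * (b - a) / (ra + rb) := by
      field_simp; ring
    rw [e, abs_div, abs_of_pos hsab, div_lt_iff₀ hsab, abs_mul, abs_of_pos hra]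
    have : |b - a| < ra + rb := by rw [abs_sub_comm]; exact hab
    nlinarith
  have key2 : ∀ (a b ra rb : ℝ), 0 < ra → 0 < rb → |a - b| < ra + rb →
      |(rb * a + ra * b) / (ra + rb) - b| < rb := by
    intro a b ra rb hra hrb hab
    have := key b a rb ra hrb hra (by rw [abs_sub_comm, show ra + rb = rb + ra from by ring] at hab; exact hab)
    have e : (ra * b + rb * a) = (rb * a + ra * b) := by ring
    rw [e] at this
    rwa [show rb + ra = ra + rb from by ring] at this
  have hwi : w ∈ interior (homSq (r i) (p i)) :=
    mem_interior_homSq hri _ _ (key _ _ _ _ hri hrj hx) (key _ _ _ _ hri hrj hy)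
  have hwj : w ∈ interior (homSq (r j) (p j)) :=
    mem_interior_homSq hrj _ _ (key2 _ _ _ _ hri hrj hx) (key2 _ _ _ _ hri hrj hy)
  have := hP.2 i j hij
  rw [Set.eq_empty_iff_forall_notMem] at this
  exact this w ⟨hwi, hwj⟩

lemma contact_facts {n : ℕ} (r : Fin n → ℝ) (p : Fin n → ℝ × ℝ) (hP : IsSqPacking r p)
    {i j : Fin n} (h : SqContact r p i j) :
    |(p i).1 - (p j).1| ≤ r i + r j ∧ |(p i).2 - (p j).2| ≤ r i + r j ∧
      (|(p i).1 - (p j).1| = r i + r j ∨ |(p i).2 - (p j).2| = r i + r j) := by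
  obtain ⟨hij, z, hzi, hzj⟩ := h
  rw [homSq_eq (hP.1 i)] at hzi
  rw [homSq_eq (hP.1 j)] at hzj
  have hx : |(p i).1 - (p j).1| ≤ r i + r j := by
    calc |(p i).1 - (p j).1| ≤ |(p i).1 - z.1| + |z.1 - (p j).1| := abs_sub_le _ _ _
    _ ≤ r i + r j := add_le_add (by rw [abs_sub_comm]; exact hzi.1) hzj.1
  have hy : |(p i).2 - (p j).2| ≤ r i + r j := by
    calc |(p i).2 - (p j).2| ≤ |(p i).2 - z.2| + |z.2 - (p j).2| := abs_sub_le _ _ _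
    _ ≤ r i + r j := add_le_add (by rw [abs_sub_comm]; exact hzi.2) hzj.2
  refine ⟨hx, hy, ?_⟩
  by_contra hcon
  push_neg at hcon
  exact no_overlap r p hP i j hij (lt_of_le_of_ne hx hcon.1) (lt_of_le_of_ne hy hcon.2)

lemma noAllY (yv rv x1 y1 r1 x2 y2 r2 x3 y3 r3 : ℝ)
    (p0 : 0 < rv) (p1 : 0 < r1) (p2 : 0 < r2) (p3 : 0 < r3)
    (b12 : |y1 - y2| ≤ r1 + r2) (b13 : |y1 - y3| ≤ r1 + r3) (b23 : |y2 - y3| ≤ r2 + r3)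
    (d12 : |x1 - x2| = r1 + r2 ∨ |y1 - y2| = r1 + r2)
    (d13 : |x1 - x3| = r1 + r3 ∨ |y1 - y3| = r1 + r3)
    (d23 : |x2 - x3| = r2 + r3 ∨ |y2 - y3| = r2 + r3)
    (e1 : |yv - y1| = rv + r1) (e2 : |yv - y2| = rv + r2) (e3 : |yv - y3| = rv + r3) :
    False := by
  obtain ⟨b12l, b12r⟩ := abs_le.mp b12
  obtain ⟨b13l, b13r⟩ := abs_le.mp b13
  obtain ⟨b23l, b23r⟩ := abs_le.mp b23
  rcases (abs_eq (by linarith : (0:ℝ) ≤ rv + r1)).mp e1 with f1 | f1 <;>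
  rcases (abs_eq (by linarith : (0:ℝ) ≤ rv + r2)).mp e2 with f2 | f2 <;>
  rcases (abs_eq (by linarith : (0:ℝ) ≤ rv + r3)).mp e3 with f3 | f3 <;>
  try linarith
  all_goals {
    have g12 : |x1 - x2| = r1 + r2 := by
      rcases d12 with h | h
      · exact h
      · rcases abs_cases (y1 - y2) with ⟨hh, _⟩ | ⟨hh, _⟩ <;> rw [hh] at h <;> linarith
    have g13 : |x1 - x3| = r1 + r3 := by
      rcases d13 with h | h
      · exact h
      · rcases abs_cases (y1 - y3) with ⟨hh, _⟩ | ⟨hh, _⟩ <;> rw [hh] at h <;> linarith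
    have g23 : |x2 - x3| = r2 + r3 := by
      rcases d23 with h | h
      · exact h
      · rcases abs_cases (y2 - y3) with ⟨hh, _⟩ | ⟨hh, _⟩ <;> rw [hh] at h <;> linarith
    rcases (abs_eq (by linarith : (0:ℝ) ≤ r1 + r2)).mp g12 with h12 | h12 <;>
    rcases (abs_eq (by linarith : (0:ℝ) ≤ r1 + r3)).mp g13 with h13 | h13 <;>
    rcases (abs_eq (by linarith : (0:ℝ) ≤ r2 + r3)).mp g23 with h23 | h23 <;>
    linarith }

lemma corner {ι : Type*} (x y r : ι → ℝ) (i1 i2 i3 i4 : ι)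
    (h12 : i1 ≠ i2) (h13 : i1 ≠ i3) (h14 : i1 ≠ i4)
    (h23 : i2 ≠ i3) (h24 : i2 ≠ i4) (h34 : i3 ≠ i4)
    (hr : ∀ u, (u = i1 ∨ u = i2 ∨ u = i3 ∨ u = i4) → 0 < r u)
    (H : ∀ u v, (u = i1 ∨ u = i2 ∨ u = i3 ∨ u = i4) → (v = i1 ∨ v = i2 ∨ v = i3 ∨ v = i4) →
      u ≠ v → |x u - x v| ≤ r u + r v ∧ |y u - y v| ≤ r u + r v ∧
        (|x u - x v| = r u + r v ∨ |y u - y v| = r u + r v)) :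
    ∃ c, |x i1 - c| = r i1 ∧ |x i2 - c| = r i2 ∧ |x i3 - c| = r i3 ∧ |x i4 - c| = r i4 := by
  have m1 : i1 = i1 ∨ i1 = i2 ∨ i1 = i3 ∨ i1 = i4 := Or.inl rfl
  have m2 : i2 = i1 ∨ i2 = i2 ∨ i2 = i3 ∨ i2 = i4 := Or.inr (Or.inl rfl)
  have m3 : i3 = i1 ∨ i3 = i2 ∨ i3 = i3 ∨ i3 = i4 := Or.inr (Or.inr (Or.inl rfl))
  have m4 : i4 = i1 ∨ i4 = i2 ∨ i4 = i3 ∨ i4 = i4 := Or.inr (Or.inr (Or.inr rfl))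
  have hb : ∀ u v, (u = i1 ∨ u = i2 ∨ u = i3 ∨ u = i4) → (v = i1 ∨ v = i2 ∨ v = i3 ∨ v = i4) →
      u ≠ v → x u - x v ≤ r u + r v := fun u v hu hv huv => (abs_le.mp (H u v hu hv huv).1).2
  -- merge: all x-touches define the same line
  have hmerge : ∀ u v w z, (u = i1 ∨ u = i2 ∨ u = i3 ∨ u = i4) → (v = i1 ∨ v = i2 ∨ v = i3 ∨ v = i4) →
      (w = i1 ∨ w = i2 ∨ w = i3 ∨ w = i4) → (z = i1 ∨ z = i2 ∨ z = i3 ∨ z = i4) →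
      u ≠ v → w ≠ z → x v - x u = r u + r v → x z - x w = r w + r z →
      x u + r u = x w + r w := by
    intro u v w z hu hv hw hz huv hwz e1 e2
    rcases eq_or_ne u z with rfl | huz
    · rcases eq_or_ne v w with rfl | hvw
      · linarith [hr u hu, hr v hv]
      · linarith [hb v w hv hw hvw, hr u hu]
    · rcases eq_or_ne v w with rfl | hvw
      · linarith [hb z u hz hu (Ne.symm huz), hr v hv]
      · linarith [hb z u hz hu (Ne.symm huz), hb v w hv hw hvw]
  -- every vertex has an x-edge
  have key : ∀ v w1 w2 w3 : ι, (v = i1 ∨ v = i2 ∨ v = i3 ∨ v = i4) →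
      (w1 = i1 ∨ w1 = i2 ∨ w1 = i3 ∨ w1 = i4) → (w2 = i1 ∨ w2 = i2 ∨ w2 = i3 ∨ w2 = i4) →
      (w3 = i1 ∨ w3 = i2 ∨ w3 = i3 ∨ w3 = i4) →
      v ≠ w1 → v ≠ w2 → v ≠ w3 → w1 ≠ w2 → w1 ≠ w3 → w2 ≠ w3 →
      ∃ w, (w = i1 ∨ w = i2 ∨ w = i3 ∨ w = i4) ∧ w ≠ v ∧ |x v - x w| = r v + r w := by
    intro v w1 w2 w3 hv hw1 hw2 hw3 n1 n2 n3 n12 n13 n23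
    rcases (H v w1 hv hw1 n1).2.2 with hX | hY1
    · exact ⟨w1, hw1, Ne.symm n1, hX⟩
    rcases (H v w2 hv hw2 n2).2.2 with hX | hY2
    · exact ⟨w2, hw2, Ne.symm n2, hX⟩
    rcases (H v w3 hv hw3 n3).2.2 with hX | hY3
    · exact ⟨w3, hw3, Ne.symm n3, hX⟩
    exact absurd (noAllY (y v) (r v) (x w1) (y w1) (r w1) (x w2) (y w2) (r w2)
      (x w3) (y w3) (r w3) (hr v hv) (hr w1 hw1) (hr w2 hw2) (hr w3 hw3)
      (H w1 w2 hw1 hw2 n12).2.1 (H w1 w3 hw1 hw3 n13).2.1 (H w2 w3 hw2 hw3 n23).2.1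
      (H w1 w2 hw1 hw2 n12).2.2 (H w1 w3 hw1 hw3 n13).2.2 (H w2 w3 hw2 hw3 n23).2.2
      hY1 hY2 hY3) (fun h => h)
  obtain ⟨w1, hw1m, hw1v, he1⟩ := key i1 i2 i3 i4 m1 m2 m3 m4 h12 h13 h14 h23 h24 h34
  obtain ⟨t0, h0, ht0, hh0, hth, e0⟩ :
      ∃ t0 h0, (t0 = i1 ∨ t0 = i2 ∨ t0 = i3 ∨ t0 = i4) ∧
        (h0 = i1 ∨ h0 = i2 ∨ h0 = i3 ∨ h0 = i4) ∧ t0 ≠ h0 ∧ x h0 - x t0 = r t0 + r h0 := by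
    rcases (abs_eq (by linarith [hr i1 m1, hr w1 hw1m] : (0:ℝ) ≤ r i1 + r w1)).mp he1 with ho | ho
    · exact ⟨w1, i1, hw1m, m1, hw1v, by linarith⟩
    · exact ⟨i1, w1, m1, hw1m, Ne.symm hw1v, by linarith⟩
  have step : ∀ v w, (v = i1 ∨ v = i2 ∨ v = i3 ∨ v = i4) → (w = i1 ∨ w = i2 ∨ w = i3 ∨ w = i4) →
      w ≠ v → |x v - x w| = r v + r w → |x v - (x t0 + r t0)| = r v := by
    intro v w hv hw hwv he
    rcases (abs_eq (by linarith [hr v hv, hr w hw] : (0:ℝ) ≤ r v + r w)).mp he with ho | ho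
    · have q := hmerge w v t0 h0 hw hv ht0 hh0 hwv hth (by linarith) e0
      rw [show x v - (x t0 + r t0) = r v from by linarith, abs_of_pos (hr v hv)]
    · have q := hmerge v w t0 h0 hv hw ht0 hh0 (Ne.symm hwv) hth (by linarith) e0
      rw [show x v - (x t0 + r t0) = -r v from by linarith, abs_neg, abs_of_pos (hr v hv)]
  obtain ⟨w2', hw2m, hw2v, he2⟩ := key i2 i1 i3 i4 m2 m1 m3 m4 (Ne.symm h12) h23 h24 h13 h14 h34
  obtain ⟨w3', hw3m, hw3v, he3⟩ := key i3 i1 i2 i4 m3 m1 m2 m4 (Ne.symm h13) (Ne.symm h23) h34 h12 h14 h24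
  obtain ⟨w4', hw4m, hw4v, he4⟩ := key i4 i1 i2 i3 m4 m1 m2 m3 (Ne.symm h14) (Ne.symm h24) (Ne.symm h34) h12 h13 h23
  exact ⟨x t0 + r t0, step i1 w1 m1 hw1m hw1v he1, step i2 w2' m2 hw2m hw2v he2,
    step i3 w3' m3 hw3m hw3v he3, step i4 w4' m4 hw4m hw4v he4⟩

set_option maxHeartbeats 1000000 in
lemma pigeon3 (a1 a2 a3 b1 b2 b3 r1 r2 r3 c c' t : ℝ)
    (p1 : 0 < r1) (p2 : 0 < r2) (p3 : 0 < r3) (hcc : c ≠ c')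
    (ha1 : |a1 - c| = r1) (ha1' : |a1 - c'| = r1) (hb1 : |b1 - t| = r1)
    (ha2 : |a2 - c| = r2) (ha2' : |a2 - c'| = r2) (hb2 : |b2 - t| = r2)
    (ha3 : |a3 - c| = r3) (ha3' : |a3 - c'| = r3) (hb3 : |b3 - t| = r3) :
    (a1 = a2 ∧ b1 = b2) ∨ (a1 = a3 ∧ b1 = b3) ∨ (a2 = a3 ∧ b2 = b3) := by
  have k1 : 2 * a1 = c + c' ∧ (2 * r1 = c' - c ∨ 2 * r1 = c - c') := by
    rcases (abs_eq p1.le).mp ha1 with h | h <;> rcases (abs_eq p1.le).mp ha1' with h' | h' <;>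
    first
    | exact absurd (show c = c' from by linarith) hcc
    | exact ⟨by linarith, Or.inl (by linarith)⟩
    | exact ⟨by linarith, Or.inr (by linarith)⟩
  have k2 : 2 * a2 = c + c' ∧ (2 * r2 = c' - c ∨ 2 * r2 = c - c') := by
    rcases (abs_eq p2.le).mp ha2 with h | h <;> rcases (abs_eq p2.le).mp ha2' with h' | h' <;>
    first
    | exact absurd (show c = c' from by linarith) hcc
    | exact ⟨by linarith, Or.inl (by linarith)⟩
    | exact ⟨by linarith, Or.inr (by linarith)⟩
  have k3 : 2 * a3 = c + c' ∧ (2 * r3 = c' - c ∨ 2 * r3 = c - c') := by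
    rcases (abs_eq p3.le).mp ha3 with h | h <;> rcases (abs_eq p3.le).mp ha3' with h' | h' <;>
    first
    | exact absurd (show c = c' from by linarith) hcc
    | exact ⟨by linarith, Or.inl (by linarith)⟩
    | exact ⟨by linarith, Or.inr (by linarith)⟩
  obtain ⟨hx1, hr1⟩ := k1
  obtain ⟨hx2, hr2⟩ := k2
  obtain ⟨hx3, hr3⟩ := k3
  rcases hr1 with h1 | h1 <;> rcases hr2 with h2 | h2 <;> rcases hr3 with h3 | h3 <;>
  try (exfalso; linarith)
  all_goals
    rcases (abs_eq p1.le).mp hb1 with g1 | g1 <;> rcases (abs_eq p2.le).mp hb2 with g2 | g2 <;>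
    rcases (abs_eq p3.le).mp hb3 with g3 | g3 <;>
    first
    | exact Or.inl ⟨by linarith, by linarith⟩
    | exact Or.inr (Or.inl ⟨by linarith, by linarith⟩)
    | exact Or.inr (Or.inr ⟨by linarith, by linarith⟩)

lemma side_eq (u v c ru rv : ℝ) (hu : 0 < ru) (hv : 0 < rv)
    (h1 : |u - c| = ru) (h2 : |v - c| = rv) (hs : (u < c) ↔ (v < c)) :
    |u - v| < ru + rv := by
  rcases (abs_eq hu.le).mp h1 with h | h <;> rcases (abs_eq hv.le).mp h2 with h' | h' <;>
  rw [abs_lt] <;> constructor <;>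
  first
  | linarith
  | (have hvc : v < c := by linarith
     have := hs.mpr hvc
     linarith)
  | (have huc : u < c := by linarith
     have := hs.mp huc
     linarith)

/-- **Lemma 2.6.** Two distinct cliques of size 4 in the contact graph of a homothetic
square packing share at most 2 vertices. -/
theorem cliques_share_at_most_two (n : ℕ) (r : Fin n → ℝ) (p : Fin n → ℝ × ℝ)
    (hP : IsSqPacking r p) (K K' : Finset (Fin n))
    (hK : (contactGraph r p).IsNClique 4 K) (hK' : (contactGraph r p).IsNClique 4 K')
    (hne : K ≠ K') :
    (K ∩ K').card ≤ 2 := by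
  by_contra hgt
  push_neg at hgt
  have hsub : K ∩ K' ⊆ K := Finset.inter_subset_left
  have hsub' : K ∩ K' ⊆ K' := Finset.inter_subset_right
  have hle : (K ∩ K').card ≤ 4 := le_trans (Finset.card_le_card hsub) (le_of_eq hK.2)
  have hne4 : (K ∩ K').card ≠ 4 := by
    intro h4
    have h1 : K ∩ K' = K := Finset.eq_of_subset_of_card_le hsub (by rw [hK.2, h4])
    have h2 : K ∩ K' = K' := Finset.eq_of_subset_of_card_le hsub' (by rw [hK'.2, h4])
    exact hne (h1 ▸ h2)
  have h3 : (K ∩ K').card = 3 := by omega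
  obtain ⟨t1, t2, t3, n12, n13, n23, hT⟩ := Finset.card_eq_three.mp h3
  have hsd : (K \ (K ∩ K')).card = 1 := by rw [Finset.card_sdiff_of_subset hsub, hK.2, h3]
  have hsd' : (K' \ (K ∩ K')).card = 1 := by rw [Finset.card_sdiff_of_subset hsub', hK'.2, h3]
  obtain ⟨a, ha⟩ := Finset.card_eq_one.mp hsd
  obtain ⟨b, hb⟩ := Finset.card_eq_one.mp hsd'
  have haa : a ∈ K \ (K ∩ K') := ha ▸ Finset.mem_singleton_self a
  have hbb : b ∈ K' \ (K ∩ K') := hb ▸ Finset.mem_singleton_self b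
  have haK : a ∈ K := (Finset.mem_sdiff.mp haa).1
  have haT : a ∉ K ∩ K' := (Finset.mem_sdiff.mp haa).2
  have hbK' : b ∈ K' := (Finset.mem_sdiff.mp hbb).1
  have hbT : b ∉ K ∩ K' := (Finset.mem_sdiff.mp hbb).2
  have hab : a ≠ b := by
    intro h
    subst h
    exact haT (Finset.mem_inter.mpr ⟨haK, hbK'⟩)
  have ht1 : t1 ∈ K ∩ K' := by rw [hT]; simp
  have ht2 : t2 ∈ K ∩ K' := by rw [hT]; simp
  have ht3 : t3 ∈ K ∩ K' := by rw [hT]; simp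
  have ht1K := (Finset.mem_inter.mp ht1).1
  have ht2K := (Finset.mem_inter.mp ht2).1
  have ht3K := (Finset.mem_inter.mp ht3).1
  have ht1K' := (Finset.mem_inter.mp ht1).2
  have ht2K' := (Finset.mem_inter.mp ht2).2
  have ht3K' := (Finset.mem_inter.mp ht3).2
  have na1 : t1 ≠ a := fun h => haT (h ▸ ht1)
  have na2 : t2 ≠ a := fun h => haT (h ▸ ht2)
  have na3 : t3 ≠ a := fun h => haT (h ▸ ht3)
  have nb1 : t1 ≠ b := fun h => hbT (h ▸ ht1)
  have nb2 : t2 ≠ b := fun h => hbT (h ▸ ht2)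
  have nb3 : t3 ≠ b := fun h => hbT (h ▸ ht3)
  set X : Fin n → ℝ := fun i => (p i).1 with hX
  set Y : Fin n → ℝ := fun i => (p i).2 with hY
  have factK : ∀ u v : Fin n, u ∈ K → v ∈ K → u ≠ v →
      |X u - X v| ≤ r u + r v ∧ |Y u - Y v| ≤ r u + r v ∧
        (|X u - X v| = r u + r v ∨ |Y u - Y v| = r u + r v) := by
    intro u v hu hv huv
    exact contact_facts r p hP (i := u) (j := v) (hK.1 (Finset.mem_coe.mpr hu) (Finset.mem_coe.mpr hv) huv)
  have factK' : ∀ u v : Fin n, u ∈ K' → v ∈ K' → u ≠ v →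
      |X u - X v| ≤ r u + r v ∧ |Y u - Y v| ≤ r u + r v ∧
        (|X u - X v| = r u + r v ∨ |Y u - Y v| = r u + r v) := by
    intro u v hu hv huv
    exact contact_facts r p hP (i := u) (j := v) (hK'.1 (Finset.mem_coe.mpr hu) (Finset.mem_coe.mpr hv) huv)
  have memKa : ∀ u : Fin n, (u = t1 ∨ u = t2 ∨ u = t3 ∨ u = a) → u ∈ K := by
    rintro u (rfl | rfl | rfl | rfl) <;> assumption
  have memKb : ∀ u : Fin n, (u = t1 ∨ u = t2 ∨ u = t3 ∨ u = b) → u ∈ K' := by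
    rintro u (rfl | rfl | rfl | rfl) <;> assumption
  have hrpos : ∀ (u : Fin n), 0 < r u := hP.1
  obtain ⟨cK, hc1, hc2, hc3, hc4⟩ := corner X Y r t1 t2 t3 a n12 n13 na1 n23 na2 na3
    (fun u _ => hrpos u)
    (fun u v hu hv huv => factK u v (memKa u hu) (memKa v hv) huv)
  obtain ⟨tK, hd1, hd2, hd3, hd4⟩ := corner Y X r t1 t2 t3 a n12 n13 na1 n23 na2 na3
    (fun u _ => hrpos u)
    (fun u v hu hv huv =>
      ⟨(factK u v (memKa u hu) (memKa v hv) huv).2.1, (factK u v (memKa u hu) (memKa v hv) huv).1,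
       (factK u v (memKa u hu) (memKa v hv) huv).2.2.symm⟩)
  obtain ⟨cK', hc1', hc2', hc3', hc4'⟩ := corner X Y r t1 t2 t3 b n12 n13 nb1 n23 nb2 nb3
    (fun u _ => hrpos u)
    (fun u v hu hv huv => factK' u v (memKb u hu) (memKb v hv) huv)
  obtain ⟨tK', hd1', hd2', hd3', hd4'⟩ := corner Y X r t1 t2 t3 b n12 n13 nb1 n23 nb2 nb3
    (fun u _ => hrpos u)
    (fun u v hu hv huv =>
      ⟨(factK' u v (memKb u hu) (memKb v hv) huv).2.1, (factK' u v (memKb u hu) (memKb v hv) huv).1,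
       (factK' u v (memKb u hu) (memKb v hv) huv).2.2.symm⟩)
  have same_sq : ∀ u v : Fin n, u ≠ v → X u = X v → Y u = Y v → False := by
    intro u v huv hxe hye
    refine no_overlap r p hP u v huv ?_ ?_
    · rw [show (p u).1 - (p v).1 = 0 from by rw [show (p u).1 = X u from rfl, show (p v).1 = X v from rfl, hxe]; ring]
      rw [abs_zero]; linarith [hrpos u, hrpos v]
    · rw [show (p u).2 - (p v).2 = 0 from by rw [show (p u).2 = Y u from rfl, show (p v).2 = Y v from rfl, hye]; ring]
      rw [abs_zero]; linarith [hrpos u, hrpos v]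
  by_cases hcc : cK = cK'
  · by_cases htt : tK = tK'
    · -- all five squares share the corner (cK, tK)
      subst hcc; subst htt
      classical
      set S5 : Finset (Fin n) := insert t1 (insert t2 (insert t3 (insert a {b}))) with hS5
      have hcard5 : S5.card = 5 := by
        rw [hS5, Finset.card_insert_of_notMem (by simp [n12, n13, na1, nb1]),
          Finset.card_insert_of_notMem (by simp [n23, na2, nb2]),
          Finset.card_insert_of_notMem (by simp [na3, nb3]),
          Finset.card_insert_of_notMem (by simp [hab]), Finset.card_singleton]
      have eqs : ∀ i ∈ S5, |X i - cK| = r i ∧ |Y i - tK| = r i := by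
        intro i hi
        rw [hS5] at hi
        simp only [Finset.mem_insert, Finset.mem_singleton] at hi
        rcases hi with rfl | rfl | rfl | rfl | rfl
        exacts [⟨hc1, hd1⟩, ⟨hc2, hd2⟩, ⟨hc3, hd3⟩, ⟨hc4, hd4⟩, ⟨hc4', hd4'⟩]
      have hpig := Finset.exists_ne_map_eq_of_card_lt_of_maps_to
        (s := S5) (t := (Finset.univ : Finset (Bool × Bool)))
        (by rw [hcard5, Finset.card_univ]; decide)
        (f := fun i => (decide (X i < cK), decide (Y i < tK)))
        (fun x _ => Finset.mem_univ _)
      obtain ⟨u, hu, v, hv, huv, hf⟩ := hpig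
      have hfx : (X u < cK) ↔ (X v < cK) := decide_eq_decide.mp (congrArg Prod.fst hf)
      have hfy : (Y u < tK) ↔ (Y v < tK) := decide_eq_decide.mp (congrArg Prod.snd hf)
      have h1 := eqs u hu
      have h2 := eqs v hv
      exact no_overlap r p hP u v huv
        (side_eq (X u) (X v) cK (r u) (r v) (hrpos u) (hrpos v) h1.1 h2.1 hfx)
        (side_eq (Y u) (Y v) tK (r u) (r v) (hrpos u) (hrpos v) h1.2 h2.2 hfy)
    · -- tK ≠ tK' : pigeonhole on t1 t2 t3 using y-corners
      rcases pigeon3 (Y t1) (Y t2) (Y t3) (X t1) (X t2) (X t3) (r t1) (r t2) (r t3) tK tK' cK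
        (hrpos t1) (hrpos t2) (hrpos t3) htt hd1 hd1' hc1 hd2 hd2' hc2 hd3 hd3' hc3 with
        h | h | h
      · exact same_sq t1 t2 n12 h.2 h.1
      · exact same_sq t1 t3 n13 h.2 h.1
      · exact same_sq t2 t3 n23 h.2 h.1
  · rcases pigeon3 (X t1) (X t2) (X t3) (Y t1) (Y t2) (Y t3) (r t1) (r t2) (r t3) cK cK' tK
      (hrpos t1) (hrpos t2) (hrpos t3) hcc hc1 hc1' hd1 hc2 hc2' hd2 hc3 hc3' hd3 with
      h | h | h
    · exact same_sq t1 t2 n12 h.1 h.2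
    · exact same_sq t1 t3 n13 h.1 h.2
    · exact same_sq t2 t3 n23 h.1 h.2
end
end

section
/- Let P be a homothetic packing of n squares with contact graph G = ([n], E), and let {i,j}, {k,ℓ} ∈ E be two edges sharing no vertices. Then: (1) the interiors of the sets S_i ∪ S_j and S_k ∪ S_ℓ are disjoint; (2) if the closed line segments [p_i, p_j] and [p_k, p_ℓ] intersect, then the four squares S_i, S_j, S_k, S_ℓ share a corner, the edges {i,j} and {k,ℓ} lie in E_x ∩ E_y, and the edges {i,k}, {i,ℓ}, {j,k}, {j,ℓ} lie in the symmetric difference E_x △ E_y. -/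
open Finset Real

noncomputable section

namespace SqPackingAux

open Metric

lemma mem_cb_iff (p z : ℝ × ℝ) (ρ : ℝ) : z ∈ closedBall p ρ ↔ |z.1 - p.1| ≤ ρ ∧ |z.2 - p.2| ≤ ρ := by
  simp [Metric.mem_closedBall, Prod.dist_eq, Real.dist_eq, max_le_iff]

lemma mem_b_iff (p z : ℝ × ℝ) (ρ : ℝ) : z ∈ ball p ρ ↔ |z.1 - p.1| < ρ ∧ |z.2 - p.2| < ρ := by
  simp [Metric.mem_ball, Prod.dist_eq, Real.dist_eq, max_lt_iff]

lemma homSq_eq {r : ℝ} (hr : 0 < r) (p : ℝ × ℝ) : homSq r p = closedBall p r := by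
  ext z
  rw [mem_cb_iff]
  constructor
  · rintro ⟨q, ⟨h1, h2, h3, h4⟩, rfl⟩
    constructor <;>
      simp only [Prod.fst_add, Prod.snd_add, Prod.smul_fst, Prod.smul_snd, smul_eq_mul,
        add_sub_cancel_right, abs_le] <;> constructor <;> nlinarith
  · rintro ⟨h1, h2⟩
    rcases abs_le.1 h1 with ⟨h1a, h1b⟩
    rcases abs_le.1 h2 with ⟨h2a, h2b⟩
    refine ⟨((z.1 - p.1)/r, (z.2 - p.2)/r), ⟨?_, ?_, ?_, ?_⟩, ?_⟩
    · rw [le_div_iff₀ hr]; linarith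
    · rw [div_le_iff₀ hr]; linarith
    · rw [le_div_iff₀ hr]; linarith
    · rw [div_le_iff₀ hr]; linarith
    · show (r • ((z.1 - p.1)/r, (z.2 - p.2)/r) + p) = z
      have e1 : r * ((z.1 - p.1)/r) + p.1 = z.1 := by field_simp; ring
      have e2 : r * ((z.2 - p.2)/r) + p.2 = z.2 := by field_simp; ring
      exact Prod.ext e1 e2

lemma interior_homSq {r : ℝ} (hr : 0 < r) (p : ℝ × ℝ) : interior (homSq r p) = ball p r := by
  rw [homSq_eq hr p, interior_closedBall p hr.ne']

lemma isClosed_homSq {r : ℝ} (hr : 0 < r) (p : ℝ × ℝ) : IsClosed (homSq r p) := by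
  rw [homSq_eq hr p]; exact Metric.isClosed_closedBall

lemma peel {S U : Set (ℝ × ℝ)} (hS : IsClosed S) (hU : IsOpen U) (hne : U.Nonempty) :
    (U \ frontier S).Nonempty := by
  by_contra h
  rw [Set.not_nonempty_iff_eq_empty, Set.diff_eq_empty] at h
  obtain ⟨x, hx⟩ := hne
  have hxf := h hx
  have hUS : U ⊆ S := h.trans hS.frontier_subset
  have hxi : x ∈ interior S := interior_maximal hUS hU hx
  rw [hS.frontier_eq] at hxf
  exact hxf.2 hxi

lemma closed_not_frontier {S : Set (ℝ × ℝ)} (hS : IsClosed S) {x : ℝ × ℝ}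
    (hx : x ∈ S) (hf : x ∉ frontier S) : x ∈ interior S := by
  by_contra hi
  exact hf (hS.frontier_eq ▸ ⟨hx, hi⟩)

lemma peel2 {A B U : Set (ℝ × ℝ)} (hA : IsClosed A) (hB : IsClosed B)
    (hU : IsOpen U) (hne : U.Nonempty) :
    ∃ x ∈ U, x ∉ frontier A ∧ x ∉ frontier B := by
  obtain ⟨x, hx⟩ := peel hB (hU.sdiff isClosed_frontier) (peel hA hU hne)
  exact ⟨x, hx.1.1, hx.1.2, hx.2⟩

lemma peel4 {A B C D U : Set (ℝ × ℝ)} (hA : IsClosed A) (hB : IsClosed B)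
    (hC : IsClosed C) (hD : IsClosed D) (hU : IsOpen U) (hne : U.Nonempty) :
    ∃ x ∈ U, x ∉ frontier A ∧ x ∉ frontier B ∧ x ∉ frontier C ∧ x ∉ frontier D := by
  have n1 := peel hA hU hne
  have o1 : IsOpen (U \ frontier A) := hU.sdiff isClosed_frontier
  have n2 := peel hB o1 n1
  have o2 : IsOpen ((U \ frontier A) \ frontier B) := o1.sdiff isClosed_frontier
  have n3 := peel hC o2 n2
  have o3 : IsOpen (((U \ frontier A) \ frontier B) \ frontier C) := o2.sdiff isClosed_frontier
  obtain ⟨x, hx⟩ := peel hD o3 n3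
  exact ⟨x, hx.1.1.1.1, hx.1.1.1.2, hx.1.1.2, hx.1.2, hx.2⟩

lemma touch_dist {r1 r2 : ℝ} (h1 : 0 < r1) (h2 : 0 < r2) {p1 p2 : ℝ × ℝ}
    (hdisj : ball p1 r1 ∩ ball p2 r2 = ∅)
    (hne : (closedBall p1 r1 ∩ closedBall p2 r2).Nonempty) :
    dist p1 p2 = r1 + r2 := by
  obtain ⟨q, hq1, hq2⟩ := hne
  have hle : dist p1 p2 ≤ r1 + r2 := by
    calc dist p1 p2 ≤ dist p1 q + dist q p2 := dist_triangle _ _ _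
    _ ≤ r1 + r2 := add_le_add (by rw [dist_comm]; exact mem_closedBall.1 hq1) (mem_closedBall.1 hq2)
  rcases eq_or_lt_of_le hle with h | hlt
  · exact h
  exfalso
  have hD : 0 < r1 + r2 := by linarith
  set c := r1 / (r1 + r2) with hc
  have hc0 : 0 < c := div_pos h1 hD
  have hc1 : c < 1 := by rw [hc, div_lt_one hD]; linarith
  set q' := p1 + c • (p2 - p1) with hq'
  have e1 : q' - p1 = c • (p2 - p1) := by rw [hq']; abel
  have e2 : q' - p2 = (c - 1) • (p2 - p1) := by rw [hq']; module
  have d1 : dist q' p1 = c * dist p1 p2 := by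
    rw [dist_eq_norm, e1, norm_smul, Real.norm_eq_abs, abs_of_pos hc0, ← dist_eq_norm, dist_comm]
  have d2 : dist q' p2 = (1 - c) * dist p1 p2 := by
    rw [dist_eq_norm, e2, norm_smul, Real.norm_eq_abs, abs_of_neg (by linarith : c - 1 < 0),
      ← dist_eq_norm, dist_comm]
    ring
  have hcd : c * (r1 + r2) = r1 := by rw [hc]; field_simp
  have m1 : q' ∈ ball p1 r1 := by
    rw [mem_ball, d1]
    calc c * dist p1 p2 < c * (r1 + r2) := by nlinarith
    _ = r1 := hcd
  have m2 : q' ∈ ball p2 r2 := by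
    rw [mem_ball, d2]
    calc (1 - c) * dist p1 p2 < (1 - c) * (r1 + r2) := by nlinarith
    _ = r2 := by nlinarith [hcd]
  exact Set.eq_empty_iff_forall_notMem.1 hdisj q' ⟨m1, m2⟩

lemma core_x (r1 r2 : ℝ) (h1 : 0 < r1) (h2 : 0 < r2) (p1 p2 z : ℝ × ℝ)
    (ha : z.1 - p1.1 = r1) (hb : p2.1 - z.1 = r2)
    (hy1 : |z.2 - p1.2| < r1) (hy2 : |z.2 - p2.2| < r2) :
    z ∈ interior (closedBall p1 r1 ∪ closedBall p2 r2) := by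
  set ρ := min (r1 - |z.2 - p1.2|) (min (r2 - |z.2 - p2.2|) (min r1 r2)) with hρdef
  have hρ : 0 < ρ := lt_min (by linarith) (lt_min (by linarith) (lt_min h1 h2))
  have hρ1 : ρ ≤ r1 - |z.2 - p1.2| := min_le_left _ _
  have hρ2 : ρ ≤ r2 - |z.2 - p2.2| := le_trans (min_le_right _ _) (min_le_left _ _)
  have hρ3 : ρ ≤ r1 := le_trans (min_le_right _ _) (le_trans (min_le_right _ _) (min_le_left _ _))
  have hρ4 : ρ ≤ r2 := le_trans (min_le_right _ _) (le_trans (min_le_right _ _) (min_le_right _ _))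
  have hsub : ball z ρ ⊆ closedBall p1 r1 ∪ closedBall p2 r2 := by
    intro q hq
    rw [mem_b_iff] at hq
    obtain ⟨hq1, hq2⟩ := hq
    obtain ⟨hq1a, hq1b⟩ := abs_lt.1 hq1
    obtain ⟨hq2a, hq2b⟩ := abs_lt.1 hq2
    have e1 := le_abs_self (z.2 - p1.2); have e1' := neg_abs_le (z.2 - p1.2)
    have e2 := le_abs_self (z.2 - p2.2); have e2' := neg_abs_le (z.2 - p2.2)
    rcases le_total q.1 z.1 with h | h
    · left; rw [mem_cb_iff]
      exact ⟨abs_le.2 ⟨by linarith, by linarith⟩, abs_le.2 ⟨by linarith, by linarith⟩⟩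
    · right; rw [mem_cb_iff]
      exact ⟨abs_le.2 ⟨by linarith, by linarith⟩, abs_le.2 ⟨by linarith, by linarith⟩⟩
  exact interior_maximal hsub isOpen_ball (mem_ball_self hρ)

lemma core_y (r1 r2 : ℝ) (h1 : 0 < r1) (h2 : 0 < r2) (p1 p2 z : ℝ × ℝ)
    (ha : z.2 - p1.2 = r1) (hb : p2.2 - z.2 = r2)
    (hy1 : |z.1 - p1.1| < r1) (hy2 : |z.1 - p2.1| < r2) :
    z ∈ interior (closedBall p1 r1 ∪ closedBall p2 r2) := by
  set ρ := min (r1 - |z.1 - p1.1|) (min (r2 - |z.1 - p2.1|) (min r1 r2)) with hρdef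
  have hρ : 0 < ρ := lt_min (by linarith) (lt_min (by linarith) (lt_min h1 h2))
  have hρ1 : ρ ≤ r1 - |z.1 - p1.1| := min_le_left _ _
  have hρ2 : ρ ≤ r2 - |z.1 - p2.1| := le_trans (min_le_right _ _) (min_le_left _ _)
  have hρ3 : ρ ≤ r1 := le_trans (min_le_right _ _) (le_trans (min_le_right _ _) (min_le_left _ _))
  have hρ4 : ρ ≤ r2 := le_trans (min_le_right _ _) (le_trans (min_le_right _ _) (min_le_right _ _))
  have hsub : ball z ρ ⊆ closedBall p1 r1 ∪ closedBall p2 r2 := by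
    intro q hq
    rw [mem_b_iff] at hq
    obtain ⟨hq1, hq2⟩ := hq
    obtain ⟨hq1a, hq1b⟩ := abs_lt.1 hq1
    obtain ⟨hq2a, hq2b⟩ := abs_lt.1 hq2
    have e1 := le_abs_self (z.1 - p1.1); have e1' := neg_abs_le (z.1 - p1.1)
    have e2 := le_abs_self (z.1 - p2.1); have e2' := neg_abs_le (z.1 - p2.1)
    rcases le_total q.2 z.2 with h | h
    · left; rw [mem_cb_iff]
      exact ⟨abs_le.2 ⟨by linarith, by linarith⟩, abs_le.2 ⟨by linarith, by linarith⟩⟩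
    · right; rw [mem_cb_iff]
      exact ⟨abs_le.2 ⟨by linarith, by linarith⟩, abs_le.2 ⟨by linarith, by linarith⟩⟩
  exact interior_maximal hsub isOpen_ball (mem_ball_self hρ)

lemma corner_main (r1 r2 : ℝ) (h1 : 0 < r1) (h2 : 0 < r2) (p1 p2 z : ℝ × ℝ)
    (hD : dist p1 p2 = r1 + r2)
    (hz1 : z.1 - p1.1 = (r1 / (r1 + r2)) * (p2.1 - p1.1))
    (hz2 : z.2 - p1.2 = (r1 / (r1 + r2)) * (p2.2 - p1.2))
    (hni : z ∉ interior (closedBall p1 r1 ∪ closedBall p2 r2)) :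
    |p2.1 - p1.1| = r1 + r2 ∧ |p2.2 - p1.2| = r1 + r2 := by
  have hDpos : 0 < r1 + r2 := by linarith
  set c := r1 / (r1 + r2) with hc
  have hc0 : 0 < c := div_pos h1 hDpos
  have hc1 : c < 1 := by rw [hc, div_lt_one hDpos]; linarith
  have hcd : c * (r1 + r2) = r1 := by rw [hc]; field_simp
  have hcd' : (1 - c) * (r1 + r2) = r2 := by nlinarith [hcd]
  have hw : max |p2.1 - p1.1| |p2.2 - p1.2| = r1 + r2 := by
    rw [← hD, Prod.dist_eq, Real.dist_eq, Real.dist_eq, abs_sub_comm p1.1 p2.1,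
      abs_sub_comm p1.2 p2.2]
  have hle1 : |p2.1 - p1.1| ≤ r1 + r2 := hw ▸ le_max_left _ _
  have hle2 : |p2.2 - p1.2| ≤ r1 + r2 := hw ▸ le_max_right _ _
  have main : ∀ _ : |p2.1 - p1.1| = r1 + r2, |p2.2 - p1.2| = r1 + r2 := by
    intro hx
    by_contra hne
    have hlt2 : |p2.2 - p1.2| < r1 + r2 := lt_of_le_of_ne hle2 hne
    apply hni
    have hy1 : |z.2 - p1.2| < r1 := by
      rw [hz2, abs_mul, abs_of_pos hc0]
      calc c * |p2.2 - p1.2| < c * (r1 + r2) := by nlinarith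
      _ = r1 := hcd
    have hzp2 : z.2 - p2.2 = (c - 1) * (p2.2 - p1.2) := by
      rw [show z.2 - p2.2 = (z.2 - p1.2) - (p2.2 - p1.2) by ring, hz2]; ring
    have hy2 : |z.2 - p2.2| < r2 := by
      rw [hzp2, abs_mul, abs_of_neg (by linarith : c - 1 < 0), neg_sub]
      calc (1 - c) * |p2.2 - p1.2| < (1 - c) * (r1 + r2) := by nlinarith
      _ = r2 := hcd'
    rcases (abs_eq hDpos.le).1 hx with he | he
    · have ea : z.1 - p1.1 = r1 := by rw [hz1, he, hcd]
      have eb : p2.1 - z.1 = r2 := by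
        have h' : p2.1 - z.1 = (p2.1 - p1.1) - (z.1 - p1.1) := by ring
        rw [h', he, ea]; linarith
      exact core_x r1 r2 h1 h2 p1 p2 z ea eb hy1 hy2
    · rw [Set.union_comm]
      have ea : z.1 - p2.1 = r2 := by
        have h' : z.1 - p2.1 = (z.1 - p1.1) - (p2.1 - p1.1) := by ring
        rw [h', hz1, he]; nlinarith [hcd]
      have eb : p1.1 - z.1 = r1 := by
        have h' : p1.1 - z.1 = -(z.1 - p2.1) - (p2.1 - p1.1) := by ring
        rw [h', ea, he]; ring
      exact core_x r2 r1 h2 h1 p2 p1 z ea eb hy2 hy1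
  have main' : ∀ _ : |p2.2 - p1.2| = r1 + r2, |p2.1 - p1.1| = r1 + r2 := by
    intro hx
    by_contra hne
    have hlt2 : |p2.1 - p1.1| < r1 + r2 := lt_of_le_of_ne hle1 hne
    apply hni
    have hy1 : |z.1 - p1.1| < r1 := by
      rw [hz1, abs_mul, abs_of_pos hc0]
      calc c * |p2.1 - p1.1| < c * (r1 + r2) := by nlinarith
      _ = r1 := hcd
    have hzp2 : z.1 - p2.1 = (c - 1) * (p2.1 - p1.1) := by
      rw [show z.1 - p2.1 = (z.1 - p1.1) - (p2.1 - p1.1) by ring, hz1]; ring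
    have hy2 : |z.1 - p2.1| < r2 := by
      rw [hzp2, abs_mul, abs_of_neg (by linarith : c - 1 < 0), neg_sub]
      calc (1 - c) * |p2.1 - p1.1| < (1 - c) * (r1 + r2) := by nlinarith
      _ = r2 := hcd'
    rcases (abs_eq hDpos.le).1 hx with he | he
    · have ea : z.2 - p1.2 = r1 := by rw [hz2, he, hcd]
      have eb : p2.2 - z.2 = r2 := by
        have h' : p2.2 - z.2 = (p2.2 - p1.2) - (z.2 - p1.2) := by ring
        rw [h', he, ea]; linarith
      exact core_y r1 r2 h1 h2 p1 p2 z ea eb hy1 hy2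
    · rw [Set.union_comm]
      have ea : z.2 - p2.2 = r2 := by
        have h' : z.2 - p2.2 = (z.2 - p1.2) - (p2.2 - p1.2) := by ring
        rw [h', hz2, he]; nlinarith [hcd]
      have eb : p1.2 - z.2 = r1 := by
        have h' : p1.2 - z.2 = -(z.2 - p2.2) - (p2.2 - p1.2) := by ring
        rw [h', ea, he]; ring
      exact core_y r2 r1 h2 h1 p2 p1 z ea eb hy2 hy1
  rcases max_choice |p2.1 - p1.1| |p2.2 - p1.2| with hmc | hmc <;> rw [hmc] at hw
  · exact ⟨hw, main hw⟩
  · exact ⟨main' hw, hw⟩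

lemma stepA_gen {r1 r2 rc : ℝ} (h1 : 0 < r1) (h2 : 0 < r2) (hc : 0 < rc)
    {p1 p2 pc z : ℝ × ℝ}
    (hd1 : ball pc rc ∩ ball p1 r1 = ∅) (hd2 : ball pc rc ∩ ball p2 r2 = ∅)
    (hz : z ∈ closedBall pc rc) :
    z ∉ interior (closedBall p1 r1 ∪ closedBall p2 r2) := by
  intro hmem
  obtain ⟨ε, hε, hsub⟩ := Metric.mem_nhds_iff.1 (mem_interior_iff_mem_nhds.1 hmem)
  obtain ⟨q, hq1, hq2⟩ : ∃ q, q ∈ ball z ε ∧ q ∈ ball pc rc := by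
    set s := min 1 (ε / (2 * rc)) with hs
    have hs0 : 0 < s := lt_min one_pos (div_pos hε (by positivity))
    have hs1 : s ≤ 1 := min_le_left _ _
    have hs2 : s ≤ ε / (2 * rc) := min_le_right _ _
    have hd : dist z pc ≤ rc := mem_closedBall.1 hz
    refine ⟨z + s • (pc - z), ?_, ?_⟩
    · rw [mem_ball, dist_eq_norm, add_sub_cancel_left, norm_smul, Real.norm_eq_abs,
        abs_of_pos hs0]
      have hn : ‖pc - z‖ = dist z pc := by rw [← dist_eq_norm, dist_comm]
      rw [hn]
      calc s * dist z pc ≤ (ε / (2 * rc)) * rc := by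
            apply mul_le_mul hs2 hd dist_nonneg (div_pos hε (by positivity)).le
      _ = ε / 2 := by field_simp
      _ < ε := by linarith
    · rw [mem_ball, dist_eq_norm]
      have e : z + s • (pc - z) - pc = (1 - s) • (z - pc) := by module
      rw [e, norm_smul, Real.norm_eq_abs, abs_of_nonneg (by linarith)]
      have hd' : ‖z - pc‖ ≤ rc := by rwa [← dist_eq_norm]
      rcases eq_or_lt_of_le (norm_nonneg (z - pc)) with h0 | h0
      · rw [← h0, mul_zero]; exact hc
      · nlinarith
  have hWo : IsOpen (ball z ε ∩ ball pc rc) := isOpen_ball.inter isOpen_ball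
  obtain ⟨x, hxW, hf1, hf2⟩ := peel2 (Metric.isClosed_closedBall (x := p1) (ε := r1))
    (Metric.isClosed_closedBall (x := p2) (ε := r2)) hWo ⟨q, hq1, hq2⟩
  have hx12 : x ∈ closedBall p1 r1 ∪ closedBall p2 r2 := hsub hxW.1
  have hxc : x ∈ ball pc rc := hxW.2
  rcases hx12 with h | h
  · have hmem' := closed_not_frontier Metric.isClosed_closedBall h hf1
    rw [interior_closedBall _ h1.ne'] at hmem'
    exact Set.eq_empty_iff_forall_notMem.1 hd1 x ⟨hxc, hmem'⟩
  · have hmem' := closed_not_frontier Metric.isClosed_closedBall h hf2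
    rw [interior_closedBall _ h2.ne'] at hmem'
    exact Set.eq_empty_iff_forall_notMem.1 hd2 x ⟨hxc, hmem'⟩

set_option maxHeartbeats 1000000 in
lemma cross_pair (r1 r2 r3 : ℝ) (h1 : 0 < r1) (h2 : 0 < r2) (h3 : 0 < r3)
    (p1 p2 p3 z : ℝ × ℝ) (s1 s2 u1 u2 : ℝ)
    (hs1 : s1 = 1 ∨ s1 = -1) (hs2 : s2 = 1 ∨ s2 = -1)
    (hu1 : u1 = 1 ∨ u1 = -1) (hu2 : u2 = 1 ∨ u2 = -1)
    (e11 : z.1 - p1.1 = r1 * s1) (e12 : z.2 - p1.2 = r1 * s2)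
    (e21 : z.1 - p2.1 = r2 * u1) (e22 : z.2 - p2.2 = r2 * u2)
    (e31 : z.1 - p3.1 = -(r3 * s1)) (e32 : z.2 - p3.2 = -(r3 * s2))
    (hd12 : max |p1.1 - p2.1| |p1.2 - p2.2| = r1 + r2)
    (hd32 : max |p3.1 - p2.1| |p3.2 - p2.2| = r3 + r2) :
    (r1 + r2 = |p1.1 - p2.1| ∧ |p1.2 - p2.2| ≤ |p1.1 - p2.1| ∧ ¬ (r1 + r2 = |p1.2 - p2.2|))
    ∨ (r1 + r2 = |p1.2 - p2.2| ∧ |p1.1 - p2.1| ≤ |p1.2 - p2.2| ∧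
        ¬ (r1 + r2 = |p1.1 - p2.1|)) := by
  rcases hs1 with rfl | rfl <;> rcases hs2 with rfl | rfl <;> rcases hu1 with rfl | rfl <;>
    rcases hu2 with rfl | rfl <;>
    norm_num at e11 e12 e21 e22 e31 e32 <;>
    first
    | (exfalso
       rcases max_choice |p1.1 - p2.1| |p1.2 - p2.2| with h | h <;> rw [h] at hd12 <;>
         rcases abs_cases (p1.1 - p2.1) with ⟨ha', ha''⟩ | ⟨ha', ha''⟩ <;>
         rcases abs_cases (p1.2 - p2.2) with ⟨hb', hb''⟩ | ⟨hb', hb''⟩ <;> linarith)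
    | (exfalso
       rcases max_choice |p3.1 - p2.1| |p3.2 - p2.2| with h | h <;> rw [h] at hd32 <;>
         rcases abs_cases (p3.1 - p2.1) with ⟨ha', ha''⟩ | ⟨ha', ha''⟩ <;>
         rcases abs_cases (p3.2 - p2.2) with ⟨hb', hb''⟩ | ⟨hb', hb''⟩ <;> linarith)
    | (left
       have hA : |p1.1 - p2.1| = r1 + r2 := by
         rcases abs_cases (p1.1 - p2.1) with ⟨h', h''⟩ | ⟨h', h''⟩ <;> rw [h'] <;> linarith
       have hB : |p1.2 - p2.2| < r1 + r2 := by
         rcases abs_cases (p1.2 - p2.2) with ⟨h', h''⟩ | ⟨h', h''⟩ <;> rw [h'] <;> linarith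
       exact ⟨hA.symm, by rw [hA]; exact hB.le,
         fun hcon => by rw [hcon] at hB; exact lt_irrefl _ hB⟩)
    | (right
       have hA : |p1.2 - p2.2| = r1 + r2 := by
         rcases abs_cases (p1.2 - p2.2) with ⟨h', h''⟩ | ⟨h', h''⟩ <;> rw [h'] <;> linarith
       have hB : |p1.1 - p2.1| < r1 + r2 := by
         rcases abs_cases (p1.1 - p2.1) with ⟨h', h''⟩ | ⟨h', h''⟩ <;> rw [h'] <;> linarith
       exact ⟨hA.symm, by rw [hA]; exact hB.le,
         fun hcon => by rw [hcon] at hB; exact lt_irrefl _ hB⟩)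

end SqPackingAux

open SqPackingAux Metric in
set_option maxHeartbeats 2000000 in
/-- **Lemma 2.8.** For two vertex-disjoint edges `{i,j}` and `{k,l}` of the contact graph:
(1) the interiors of `S_i ∪ S_j` and `S_k ∪ S_l` are disjoint;
(2) if the closed segments `[p_i,p_j]` and `[p_k,p_l]` intersect, then the four squares
share a corner, `{i,j}, {k,l} ∈ E_x ∩ E_y`, and the edges `{i,k}, {i,l}, {j,k}, {j,l}`
lie in the symmetric difference `E_x △ E_y`. -/
theorem disjoint_edges_lemma (n : ℕ) (r : Fin n → ℝ) (p : Fin n → ℝ × ℝ)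
    (hP : IsSqPacking r p) (i j k l : Fin n)
    (hij : SqContact r p i j) (hkl : SqContact r p k l)
    (hik : i ≠ k) (hil : i ≠ l) (hjk : j ≠ k) (hjl : j ≠ l) :
    interior (homSq (r i) (p i) ∪ homSq (r j) (p j)) ∩
      interior (homSq (r k) (p k) ∪ homSq (r l) (p l)) = ∅ ∧
    ((segment ℝ (p i) (p j) ∩ segment ℝ (p k) (p l)).Nonempty →
      ShareCorner r p i j k l ∧
      (XContact r p i j ∧ YContact r p i j) ∧
      (XContact r p k l ∧ YContact r p k l) ∧
      Xor' (XContact r p i k) (YContact r p i k) ∧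
      Xor' (XContact r p i l) (YContact r p i l) ∧
      Xor' (XContact r p j k) (YContact r p j k) ∧
      Xor' (XContact r p j l) (YContact r p j l)) := by
  obtain ⟨hr, hdisj⟩ := hP
  have hcb : ∀ a : Fin n, homSq (r a) (p a) = closedBall (p a) (r a) :=
    fun a => homSq_eq (hr a) (p a)
  have hball : ∀ a b : Fin n, a ≠ b →
      ball (p a) (r a) ∩ ball (p b) (r b) = ∅ := by
    intro a b hne
    have h := hdisj a b hne
    rwa [interior_homSq (hr a), interior_homSq (hr b)] at h
  have hdist : ∀ a b : Fin n, SqContact r p a b → dist (p a) (p b) = r a + r b := by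
    intro a b hab
    refine touch_dist (hr a) (hr b) (hball a b hab.1) ?_
    obtain ⟨q, hq1, hq2⟩ := hab.2
    exact ⟨q, by rwa [← hcb a], by rwa [← hcb b]⟩
  constructor
  · -- part (1)
    by_contra hcon
    obtain ⟨x0, hx0⟩ := Set.nonempty_iff_ne_empty.2 hcon
    have hUo : IsOpen (interior (homSq (r i) (p i) ∪ homSq (r j) (p j)) ∩
        interior (homSq (r k) (p k) ∪ homSq (r l) (p l))) :=
      isOpen_interior.inter isOpen_interior
    obtain ⟨x, hxU, f1, f2, f3, f4⟩ := peel4 (isClosed_homSq (hr i) (p i))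
      (isClosed_homSq (hr j) (p j)) (isClosed_homSq (hr k) (p k))
      (isClosed_homSq (hr l) (p l)) hUo ⟨x0, hx0⟩
    have hx1 : x ∈ interior (homSq (r i) (p i)) ∨ x ∈ interior (homSq (r j) (p j)) := by
      rcases interior_subset hxU.1 with h | h
      exacts [Or.inl (closed_not_frontier (isClosed_homSq (hr i) (p i)) h f1),
        Or.inr (closed_not_frontier (isClosed_homSq (hr j) (p j)) h f2)]
    have hx2 : x ∈ interior (homSq (r k) (p k)) ∨ x ∈ interior (homSq (r l) (p l)) := by
      rcases interior_subset hxU.2 with h | h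
      exacts [Or.inl (closed_not_frontier (isClosed_homSq (hr k) (p k)) h f3),
        Or.inr (closed_not_frontier (isClosed_homSq (hr l) (p l)) h f4)]
    rcases hx1 with h | h <;> rcases hx2 with h' | h'
    exacts [Set.eq_empty_iff_forall_notMem.1 (hdisj i k hik) x ⟨h, h'⟩,
      Set.eq_empty_iff_forall_notMem.1 (hdisj i l hil) x ⟨h, h'⟩,
      Set.eq_empty_iff_forall_notMem.1 (hdisj j k hjk) x ⟨h, h'⟩,
      Set.eq_empty_iff_forall_notMem.1 (hdisj j l hjl) x ⟨h, h'⟩]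
  · -- part (2)
    rintro ⟨z, hzij, hzkl⟩
    obtain ⟨a, b, ha, hb, hab, hzab⟩ := hzij
    obtain ⟨a', b', ha', hb', hab', hzab'⟩ := hzkl
    have Dij := hdist i j hij
    have Dkl := hdist k l hkl
    have hDij : 0 < r i + r j := add_pos (hr i) (hr j)
    have hDkl : 0 < r k + r l := add_pos (hr k) (hr l)
    have vij : z - p i = b • (p j - p i) := by
      have hae : a = 1 - b := by linarith
      rw [← hzab, hae]; module
    have vkl : z - p k = b' • (p l - p k) := by
      have hae : a' = 1 - b' := by linarith
      rw [← hzab', hae]; module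
    have vji : z - p j = a • (p i - p j) := by
      have hbe : b = 1 - a := by linarith
      rw [← hzab, hbe]; module
    have vlk : z - p l = a' • (p k - p l) := by
      have hbe : b' = 1 - a' := by linarith
      rw [← hzab', hbe]; module
    have dzi : dist z (p i) = b * (r i + r j) := by
      rw [dist_eq_norm, vij, norm_smul, Real.norm_eq_abs, abs_of_nonneg hb,
        show ‖p j - p i‖ = dist (p i) (p j) from by rw [← dist_eq_norm, dist_comm], Dij]
    have dzj : dist z (p j) = a * (r i + r j) := by
      rw [dist_eq_norm, vji, norm_smul, Real.norm_eq_abs, abs_of_nonneg ha,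
        show ‖p i - p j‖ = dist (p i) (p j) from by rw [← dist_eq_norm], Dij]
    have dzk : dist z (p k) = b' * (r k + r l) := by
      rw [dist_eq_norm, vkl, norm_smul, Real.norm_eq_abs, abs_of_nonneg hb',
        show ‖p l - p k‖ = dist (p k) (p l) from by rw [← dist_eq_norm, dist_comm], Dkl]
    have dzl : dist z (p l) = a' * (r k + r l) := by
      rw [dist_eq_norm, vlk, norm_smul, Real.norm_eq_abs, abs_of_nonneg ha',
        show ‖p k - p l‖ = dist (p k) (p l) from by rw [← dist_eq_norm], Dkl]
    have hzkOl : z ∈ closedBall (p k) (r k) ∨ z ∈ closedBall (p l) (r l) := by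
      by_contra hcon
      push_neg at hcon
      obtain ⟨c1, c2⟩ := hcon
      have t1 : r k < dist z (p k) := lt_of_not_ge fun h => c1 (mem_closedBall.2 h)
      have t2 : r l < dist z (p l) := lt_of_not_ge fun h => c2 (mem_closedBall.2 h)
      rw [dzk] at t1; rw [dzl] at t2
      have e : a' * (r k + r l) + b' * (r k + r l) = r k + r l := by
        rw [← add_mul, hab', one_mul]
      linarith only [t1, t2, e]
    have hziOj : z ∈ closedBall (p i) (r i) ∨ z ∈ closedBall (p j) (r j) := by
      by_contra hcon
      push_neg at hcon
      obtain ⟨c1, c2⟩ := hcon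
      have t1 : r i < dist z (p i) := lt_of_not_ge fun h => c1 (mem_closedBall.2 h)
      have t2 : r j < dist z (p j) := lt_of_not_ge fun h => c2 (mem_closedBall.2 h)
      rw [dzi] at t1; rw [dzj] at t2
      have e : a * (r i + r j) + b * (r i + r j) = r i + r j := by
        rw [← add_mul, hab, one_mul]
      linarith only [t1, t2, e]
    have hnij : z ∉ interior (closedBall (p i) (r i) ∪ closedBall (p j) (r j)) := by
      rcases hzkOl with hc | hc
      · exact stepA_gen (hr i) (hr j) (hr k) (hball k i hik.symm) (hball k j hjk.symm) hc
      · exact stepA_gen (hr i) (hr j) (hr l) (hball l i hil.symm) (hball l j hjl.symm) hc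
    have hnkl : z ∉ interior (closedBall (p k) (r k) ∪ closedBall (p l) (r l)) := by
      rcases hziOj with hc | hc
      · exact stepA_gen (hr k) (hr l) (hr i) (hball i k hik) (hball i l hil) hc
      · exact stepA_gen (hr k) (hr l) (hr j) (hball j k hjk) (hball j l hjl) hc
    have gzi : r i ≤ dist z (p i) := by
      by_contra hcon
      push_neg at hcon
      exact hnij (interior_mono Set.subset_union_left
        (by rw [interior_closedBall _ (hr i).ne']; exact mem_ball.2 hcon))
    have gzj : r j ≤ dist z (p j) := by
      by_contra hcon
      push_neg at hcon
      exact hnij (interior_mono Set.subset_union_right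
        (by rw [interior_closedBall _ (hr j).ne']; exact mem_ball.2 hcon))
    have gzk : r k ≤ dist z (p k) := by
      by_contra hcon
      push_neg at hcon
      exact hnkl (interior_mono Set.subset_union_left
        (by rw [interior_closedBall _ (hr k).ne']; exact mem_ball.2 hcon))
    have gzl : r l ≤ dist z (p l) := by
      by_contra hcon
      push_neg at hcon
      exact hnkl (interior_mono Set.subset_union_right
        (by rw [interior_closedBall _ (hr l).ne']; exact mem_ball.2 hcon))
    rw [dzi] at gzi; rw [dzj] at gzj; rw [dzk] at gzk; rw [dzl] at gzl
    have eij : a * (r i + r j) + b * (r i + r j) = r i + r j := by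
      rw [← add_mul, hab, one_mul]
    have ekl : a' * (r k + r l) + b' * (r k + r l) = r k + r l := by
      rw [← add_mul, hab', one_mul]
    have hbD : b * (r i + r j) = r i := by linarith only [gzi, gzj, eij]
    have hbD' : b' * (r k + r l) = r k := by linarith only [gzk, gzl, ekl]
    have vij1 : z.1 - (p i).1 = b * ((p j).1 - (p i).1) := by
      have h := congrArg Prod.fst vij; simpa using h
    have vij2 : z.2 - (p i).2 = b * ((p j).2 - (p i).2) := by
      have h := congrArg Prod.snd vij; simpa using h
    have vkl1 : z.1 - (p k).1 = b' * ((p l).1 - (p k).1) := by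
      have h := congrArg Prod.fst vkl; simpa using h
    have vkl2 : z.2 - (p k).2 = b' * ((p l).2 - (p k).2) := by
      have h := congrArg Prod.snd vkl; simpa using h
    have hbeq : b = r i / (r i + r j) := by rw [eq_div_iff hDij.ne']; exact hbD
    have hbeq' : b' = r k / (r k + r l) := by rw [eq_div_iff hDkl.ne']; exact hbD'
    have cm1 := corner_main (r i) (r j) (hr i) (hr j) (p i) (p j) z Dij
      (by rw [vij1, hbeq]) (by rw [vij2, hbeq]) hnij
    have cm2 := corner_main (r k) (r l) (hr k) (hr l) (p k) (p l) z Dkl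
      (by rw [vkl1, hbeq']) (by rw [vkl2, hbeq']) hnkl
    have exs : ∀ X D : ℝ, 0 < D → |X| = D → ∃ s : ℝ, (s = 1 ∨ s = -1) ∧ X = D * s := by
      intro X D hD h
      rcases (abs_eq hD.le).1 h with h' | h'
      exacts [⟨1, Or.inl rfl, by rw [h']; ring⟩, ⟨-1, Or.inr rfl, by rw [h']; ring⟩]
    obtain ⟨s1, hs1, hw1⟩ := exs _ _ hDij cm1.1
    obtain ⟨s2, hs2, hw2⟩ := exs _ _ hDij cm1.2
    obtain ⟨t1, ht1, hv1⟩ := exs _ _ hDkl cm2.1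
    obtain ⟨t2, ht2, hv2⟩ := exs _ _ hDkl cm2.2
    have ei1 : z.1 - (p i).1 = r i * s1 := by
      rw [vij1, hw1, show b * ((r i + r j) * s1) = (b * (r i + r j)) * s1 from by ring, hbD]
    have ei2 : z.2 - (p i).2 = r i * s2 := by
      rw [vij2, hw2, show b * ((r i + r j) * s2) = (b * (r i + r j)) * s2 from by ring, hbD]
    have ek1 : z.1 - (p k).1 = r k * t1 := by
      rw [vkl1, hv1, show b' * ((r k + r l) * t1) = (b' * (r k + r l)) * t1 from by ring, hbD']
    have ek2 : z.2 - (p k).2 = r k * t2 := by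
      rw [vkl2, hv2, show b' * ((r k + r l) * t2) = (b' * (r k + r l)) * t2 from by ring, hbD']
    have ej1 : z.1 - (p j).1 = -(r j * s1) := by
      have h' : z.1 - (p j).1 = (z.1 - (p i).1) - ((p j).1 - (p i).1) := by ring
      rw [h', ei1, hw1]; ring
    have ej2 : z.2 - (p j).2 = -(r j * s2) := by
      have h' : z.2 - (p j).2 = (z.2 - (p i).2) - ((p j).2 - (p i).2) := by ring
      rw [h', ei2, hw2]; ring
    have el1 : z.1 - (p l).1 = -(r l * t1) := by
      have h' : z.1 - (p l).1 = (z.1 - (p k).1) - ((p l).1 - (p k).1) := by ring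
      rw [h', ek1, hv1]; ring
    have el2 : z.2 - (p l).2 = -(r l * t2) := by
      have h' : z.2 - (p l).2 = (z.2 - (p k).2) - ((p l).2 - (p k).2) := by ring
      rw [h', ek2, hv2]; ring
    have habs : ∀ (c s : ℝ), 0 < c → (s = 1 ∨ s = -1) → |c * s| = c := by
      rintro c s hc (rfl | rfl)
      · rw [mul_one, abs_of_pos hc]
      · rw [mul_neg_one, abs_neg, abs_of_pos hc]
    have mzi : z ∈ closedBall (p i) (r i) := (mem_cb_iff _ _ _).2
      ⟨le_of_eq (by rw [ei1, habs _ _ (hr i) hs1]), le_of_eq (by rw [ei2, habs _ _ (hr i) hs2])⟩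
    have mzj : z ∈ closedBall (p j) (r j) := (mem_cb_iff _ _ _).2
      ⟨le_of_eq (by rw [ej1, abs_neg, habs _ _ (hr j) hs1]),
       le_of_eq (by rw [ej2, abs_neg, habs _ _ (hr j) hs2])⟩
    have mzk : z ∈ closedBall (p k) (r k) := (mem_cb_iff _ _ _).2
      ⟨le_of_eq (by rw [ek1, habs _ _ (hr k) ht1]), le_of_eq (by rw [ek2, habs _ _ (hr k) ht2])⟩
    have mzl : z ∈ closedBall (p l) (r l) := (mem_cb_iff _ _ _).2
      ⟨le_of_eq (by rw [el1, abs_neg, habs _ _ (hr l) ht1]),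
       le_of_eq (by rw [el2, abs_neg, habs _ _ (hr l) ht2])⟩
    have cik : SqContact r p i k := ⟨hik, z, by rw [hcb i]; exact mzi, by rw [hcb k]; exact mzk⟩
    have cil : SqContact r p i l := ⟨hil, z, by rw [hcb i]; exact mzi, by rw [hcb l]; exact mzl⟩
    have cjk : SqContact r p j k := ⟨hjk, z, by rw [hcb j]; exact mzj, by rw [hcb k]; exact mzk⟩
    have cjl : SqContact r p j l := ⟨hjl, z, by rw [hcb j]; exact mzj, by rw [hcb l]; exact mzl⟩
    have mx : ∀ a b : Fin n, SqContact r p a b →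
        max |(p a).1 - (p b).1| |(p a).2 - (p b).2| = r a + r b := by
      intro a b h
      have h' := hdist a b h
      rwa [Prod.dist_eq, Real.dist_eq, Real.dist_eq] at h'
    have dik := mx i k cik
    have dil := mx i l cil
    have djk := mx j k cjk
    have djl := mx j l cjl
    have absij1 : |(p i).1 - (p j).1| = r i + r j := by
      rw [show (p i).1 - (p j).1 = -((p j).1 - (p i).1) from by ring, abs_neg, hw1,
        habs _ _ hDij hs1]
    have absij2 : |(p i).2 - (p j).2| = r i + r j := by
      rw [show (p i).2 - (p j).2 = -((p j).2 - (p i).2) from by ring, abs_neg, hw2,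
        habs _ _ hDij hs2]
    have abskl1 : |(p k).1 - (p l).1| = r k + r l := by
      rw [show (p k).1 - (p l).1 = -((p l).1 - (p k).1) from by ring, abs_neg, hv1,
        habs _ _ hDkl ht1]
    have abskl2 : |(p k).2 - (p l).2| = r k + r l := by
      rw [show (p k).2 - (p l).2 = -((p l).2 - (p k).2) from by ring, abs_neg, hv2,
        habs _ _ hDkl ht2]
    have Xij : XContact r p i j := ⟨hij, absij1.symm, by rw [absij1, absij2]⟩
    have Yij : YContact r p i j := ⟨hij, absij2.symm, by rw [absij1, absij2]⟩
    have Xkl : XContact r p k l := ⟨hkl, abskl1.symm, by rw [abskl1, abskl2]⟩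
    have Ykl : YContact r p k l := ⟨hkl, abskl2.symm, by rw [abskl1, abskl2]⟩
    have negs : ∀ s : ℝ, (s = 1 ∨ s = -1) → (-s = 1 ∨ -s = -1) := by
      rintro s (rfl | rfl) <;> norm_num
    refine ⟨⟨z, ?_, ?_, ?_, ?_, ?_⟩, ⟨Xij, Yij⟩, ⟨Xkl, Ykl⟩, ?_, ?_, ?_, ?_⟩
    · -- set equality
      apply Set.eq_singleton_iff_unique_mem.2
      constructor
      · exact ⟨⟨⟨by rw [hcb i]; exact mzi, by rw [hcb j]; exact mzj⟩,
          by rw [hcb k]; exact mzk⟩, by rw [hcb l]; exact mzl⟩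
      · rintro q ⟨⟨⟨hqi, hqj⟩, hqk⟩, hql⟩
        rw [hcb i, mem_cb_iff] at hqi
        rw [hcb j, mem_cb_iff] at hqj
        obtain ⟨hqi1a, hqi1b⟩ := abs_le.1 hqi.1
        obtain ⟨hqi2a, hqi2b⟩ := abs_le.1 hqi.2
        obtain ⟨hqj1a, hqj1b⟩ := abs_le.1 hqj.1
        obtain ⟨hqj2a, hqj2b⟩ := abs_le.1 hqj.2
        have hx : q.1 = z.1 := by
          rcases hs1 with rfl | rfl <;>
            linarith only [hqi1a, hqi1b, hqj1a, hqj1b, ei1, ej1]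
        have hy : q.2 = z.2 := by
          rcases hs2 with rfl | rfl <;>
            linarith only [hqi2a, hqi2b, hqj2a, hqj2b, ei2, ej2]
        exact Prod.ext hx hy
    · exact ⟨by rw [ei1, habs _ _ (hr i) hs1], by rw [ei2, habs _ _ (hr i) hs2]⟩
    · exact ⟨by rw [ej1, abs_neg, habs _ _ (hr j) hs1],
        by rw [ej2, abs_neg, habs _ _ (hr j) hs2]⟩
    · exact ⟨by rw [ek1, habs _ _ (hr k) ht1], by rw [ek2, habs _ _ (hr k) ht2]⟩
    · exact ⟨by rw [el1, abs_neg, habs _ _ (hr l) ht1],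
        by rw [el2, abs_neg, habs _ _ (hr l) ht2]⟩
    · -- Xor (i,k)
      rcases cross_pair (r i) (r k) (r j) (hr i) (hr k) (hr j) (p i) (p k) (p j) z
        s1 s2 t1 t2 hs1 hs2 ht1 ht2 ei1 ei2 ek1 ek2 ej1 ej2 dik djk with
        ⟨hA, hB, hC⟩ | ⟨hA, hB, hC⟩
      · exact Or.inl ⟨⟨cik, hA, hB⟩, fun hY => hC hY.2.1⟩
      · exact Or.inr ⟨⟨cik, hA, hB⟩, fun hX => hC hX.2.1⟩
    · -- Xor (i,l)
      rcases cross_pair (r i) (r l) (r j) (hr i) (hr l) (hr j) (p i) (p l) (p j) z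
        s1 s2 (-t1) (-t2) hs1 hs2 (negs _ ht1) (negs _ ht2) ei1 ei2
        (by rw [el1]; ring) (by rw [el2]; ring) ej1 ej2 dil djl with
        ⟨hA, hB, hC⟩ | ⟨hA, hB, hC⟩
      · exact Or.inl ⟨⟨cil, hA, hB⟩, fun hY => hC hY.2.1⟩
      · exact Or.inr ⟨⟨cil, hA, hB⟩, fun hX => hC hX.2.1⟩
    · -- Xor (j,k)
      rcases cross_pair (r j) (r k) (r i) (hr j) (hr k) (hr i) (p j) (p k) (p i) z
        (-s1) (-s2) t1 t2 (negs _ hs1) (negs _ hs2) ht1 ht2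
        (by rw [ej1]; ring) (by rw [ej2]; ring) ek1 ek2
        (by rw [ei1]; ring) (by rw [ei2]; ring) djk dik with
        ⟨hA, hB, hC⟩ | ⟨hA, hB, hC⟩
      · exact Or.inl ⟨⟨cjk, hA, hB⟩, fun hY => hC hY.2.1⟩
      · exact Or.inr ⟨⟨cjk, hA, hB⟩, fun hX => hC hX.2.1⟩
    · -- Xor (j,l)
      rcases cross_pair (r j) (r l) (r i) (hr j) (hr l) (hr i) (p j) (p l) (p i) z
        (-s1) (-s2) (-t1) (-t2) (negs _ hs1) (negs _ hs2) (negs _ ht1) (negs _ ht2)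
        (by rw [ej1]; ring) (by rw [ej2]; ring)
        (by rw [el1]; ring) (by rw [el2]; ring)
        (by rw [ei1]; ring) (by rw [ei2]; ring) djl dil with
        ⟨hA, hB, hC⟩ | ⟨hA, hB, hC⟩
      · exact Or.inl ⟨⟨cjl, hA, hB⟩, fun hY => hC hY.2.1⟩
      · exact Or.inr ⟨⟨cjl, hA, hB⟩, fun hX => hC hX.2.1⟩
end
end
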